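/- Let f, g, f̃, g̃ ∈ ℂ[[t,z]] with g(0,0) ≠ 0, f(0,0) = f̃(0,0) = 0, and such that λ := (∂f/∂z)(0,0)/g(0,0) is not a positive integer. Let m ≥ 1 be an integer and assume f_{i,j} = f̃_{i,j} and g_{i,j} = g̃_{i,j} for all pairs (i,j) with i + j ≤ m (in particular g̃(0,0) = g(0,0) ≠ 0 and (∂f̃/∂z)(0,0)/g̃(0,0) = λ). Let z and z̃ be the unique power series with zero constant term satisfying g(t,z(t))·t·z'(t) = f(t,z(t)) and g̃(t,z̃(t))·t·z̃'(t) = f̃(t,z̃(t)), respectively. Then coeff_i(z) = coeff_i(z̃) for all i ≤ m. -/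

import Mathlib

/-!
Comparing coefficients of `t^n` (`n ≥ 1`) in `g(t,z) · t z' = f(t,z)` gives
`(n g₀₀ - f₀₁) zₙ = Pₙ`, where `Pₙ` only involves the coefficients `z_k` with `k < n` and the
coefficients of `f` and `g` of total degree `≤ n`. Since `λ ≠ n`, the factor `n g₀₀ - f₀₁` is
nonzero, so `zₙ` is determined by these data, and induction on `n` gives the claim.
-/

/-- The coefficient `f_{i,j}` of `t^i z^j` in a two-variable formal power series,
where variable `0` is `t` and variable `1` is `z`. -/
noncomputable def fcoeff (f : MvPowerSeries (Fin 2) ℂ) (i j : ℕ) : ℂ :=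
  MvPowerSeries.coeff (Finsupp.single 0 i + Finsupp.single 1 j) f

/-- Substitution `f(t, z(t))` (intended for `z` with zero constant term, in which
case `coeff n (X^i * z^j) = 0` for `i + j > n`). -/
noncomputable def subst2 (f : MvPowerSeries (Fin 2) ℂ) (z : PowerSeries ℂ) : PowerSeries ℂ :=
  PowerSeries.mk fun n => ∑ i ∈ Finset.range (n + 1), ∑ j ∈ Finset.range (n + 1),
    fcoeff f i j * (PowerSeries.coeff n) (PowerSeries.X ^ i * z ^ j)

open PowerSeries Finset

namespace PowerSeries

variable {R : Type*}

section CommSemiring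

variable [CommSemiring R]

theorem trunc_eq_trunc_iff {f g : R⟦X⟧} {n : ℕ} :
    trunc n f = trunc n g ↔ ∀ k < n, coeff k f = coeff k g := by
  simp only [Polynomial.ext_iff, coeff_trunc]
  refine ⟨fun h k hk => by simpa [hk] using h k, fun h k => ?_⟩
  split_ifs with hk
  exacts [h k hk, rfl]

theorem trunc_pow_congr {f g : R⟦X⟧} {n : ℕ} (h : trunc n f = trunc n g) (j : ℕ) :
    trunc n (f ^ j) = trunc n (g ^ j) := by
  rw [← trunc_trunc_pow, h, trunc_trunc_pow]

theorem coeff_X_pow_mul_pow_of_lt {z : R⟦X⟧} (hz : constantCoeff z = 0) {n i j : ℕ}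
    (h : n < i + j) : coeff n (X ^ i * z ^ j) = 0 := by
  obtain ⟨y, rfl⟩ := X_dvd_iff.2 hz
  rw [mul_pow, ← mul_assoc, ← pow_add, coeff_X_pow_mul', if_neg (by omega)]

theorem coeff_X_mul_derivative (f : R⟦X⟧) (n : ℕ) :
    coeff n (X * d⁄dX R f) = n * coeff n f := by
  cases n with
  | zero => simp
  | succ n =>
    rw [coeff_succ_X_mul, coeff_derivative]
    push_cast
    ring

end CommSemiring

section CommRing

variable [CommRing R]

theorem coeff_mul_sub_congr {S St T Tt : R⟦X⟧} {n : ℕ}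
    (hS : trunc n S = trunc n St) (hT : trunc n T = trunc n Tt)
    (hT₀ : constantCoeff T = 0) (hTt₀ : constantCoeff Tt = 0) :
    coeff n (S * T) - coeff 0 S * coeff n T = coeff n (St * Tt) - coeff 0 St * coeff n Tt := by
  rw [trunc_eq_trunc_iff] at hS hT
  cases n with
  | zero => simp [hT₀, hTt₀]
  | succ n =>
    simp only [coeff_mul, Nat.sum_antidiagonal_succ, add_sub_cancel_left]
    refine sum_congr rfl fun p hp => ?_
    rw [HasAntidiagonal.mem_antidiagonal] at hp
    rcases Nat.eq_zero_or_pos p.2 with h₂ | h₂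
    · simp [h₂, hT₀, hTt₀]
    · rw [hS _ (by omega), hT _ (by omega)]

theorem coeff_X_pow_mul_pow_congr {z zt : R⟦X⟧} (hz : constantCoeff z = 0)
    (hzt : constantCoeff zt = 0) {n : ℕ} (h : trunc n z = trunc n zt) {i j : ℕ}
    (hij : ¬(i = 0 ∧ j = 1)) : coeff n (X ^ i * z ^ j) = coeff n (X ^ i * zt ^ j) := by
  by_cases hi : i = 0
  · subst hi
    obtain _ | _ | j := j
    · rfl
    · exact absurd ⟨rfl, rfl⟩ hij
    · simpa [pow_succ _ (j + 1), hz, hzt] using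
        coeff_mul_sub_congr (trunc_pow_congr h (j + 1)) h hz hzt
  · rw [coeff_X_pow_mul', coeff_X_pow_mul']
    split_ifs with hin
    · exact trunc_eq_trunc_iff.1 (trunc_pow_congr h j) _ (by omega)
    · rfl

end CommRing

end PowerSeries

theorem coeff_zero_subst2 (f : MvPowerSeries (Fin 2) ℂ) (z : ℂ⟦X⟧) :
    coeff 0 (subst2 f z) = fcoeff f 0 0 := by
  simp [subst2]

section subst2

variable {f ft : MvPowerSeries (Fin 2) ℂ} {z zt : ℂ⟦X⟧} {n : ℕ}

theorem coeff_subst2_sub_of_trunc_eq (hn : 1 ≤ n)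
    (hf : ∀ i j, i + j ≤ n → fcoeff f i j = fcoeff ft i j)
    (hz : constantCoeff z = 0) (hzt : constantCoeff zt = 0) (h : trunc n z = trunc n zt) :
    coeff n (subst2 f z) - coeff n (subst2 ft zt) = fcoeff f 0 1 * (coeff n z - coeff n zt) := by
  have hterm : ∀ i j, fcoeff f i j * coeff n (X ^ i * z ^ j)
      - fcoeff ft i j * coeff n (X ^ i * zt ^ j)
      = if i = 0 ∧ j = 1 then fcoeff f 0 1 * (coeff n z - coeff n zt) else 0 := by
    intro i j
    split_ifs with hij
    · obtain ⟨rfl, rfl⟩ := hij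
      simp only [← hf 0 1 hn, pow_zero, one_mul, pow_one, mul_sub]
    · rcases le_or_gt (i + j) n with hle | hlt
      · rw [hf i j hle, coeff_X_pow_mul_pow_congr hz hzt h hij, sub_self]
      · rw [coeff_X_pow_mul_pow_of_lt hz hlt, coeff_X_pow_mul_pow_of_lt hzt hlt,
          mul_zero, mul_zero, sub_self]
  simp only [subst2, coeff_mk, ← sum_sub_distrib, hterm, ite_and]
  simp [Nat.pos_iff_ne_zero.1 hn]

theorem trunc_subst2_congr (hf : ∀ i j, i + j < n → fcoeff f i j = fcoeff ft i j)
    (hz : constantCoeff z = 0) (hzt : constantCoeff zt = 0) (h : trunc n z = trunc n zt) :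
    trunc n (subst2 f z) = trunc n (subst2 ft zt) := by
  rw [trunc_eq_trunc_iff] at h ⊢
  intro a ha
  rcases Nat.eq_zero_or_pos a with rfl | ha₀
  · rw [coeff_zero_subst2, coeff_zero_subst2, hf 0 0 ha]
  · have hsub := coeff_subst2_sub_of_trunc_eq ha₀ (fun i j hij => hf i j (by omega)) hz hzt
      (trunc_eq_trunc_iff.2 fun k hk => h k (by omega))
    rwa [h a ha, sub_self, mul_zero, sub_eq_zero] at hsub

end subst2

theorem briot_bouquet_coeff_eq_of_trunc_eq {f g ft gt : MvPowerSeries (Fin 2) ℂ}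
    {z zt : ℂ⟦X⟧} {n : ℕ} (hn : 1 ≤ n)
    (hg : fcoeff g 0 0 ≠ 0) (hlam : fcoeff f 0 1 / fcoeff g 0 0 ≠ n)
    (hfa : ∀ i j, i + j ≤ n → fcoeff f i j = fcoeff ft i j)
    (hga : ∀ i j, i + j < n → fcoeff g i j = fcoeff gt i j)
    (hz : constantCoeff z = 0) (hzeq : subst2 g z * (X * d⁄dX ℂ z) = subst2 f z)
    (hzt : constantCoeff zt = 0) (hzteq : subst2 gt zt * (X * d⁄dX ℂ zt) = subst2 ft zt)
    (h : trunc n z = trunc n zt) : coeff n z = coeff n zt := by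
  have hdz : trunc n (X * d⁄dX ℂ z) = trunc n (X * d⁄dX ℂ zt) :=
    trunc_eq_trunc_iff.2 fun k hk => by
      rw [coeff_X_mul_derivative, coeff_X_mul_derivative, trunc_eq_trunc_iff.1 h k hk]
  have hlhs := coeff_mul_sub_congr (trunc_subst2_congr hga hz hzt h) hdz (by simp) (by simp)
  rw [hzeq, hzteq, coeff_zero_subst2, coeff_zero_subst2, ← hga 0 0 (by omega),
    coeff_X_mul_derivative, coeff_X_mul_derivative] at hlhs
  have hrhs := coeff_subst2_sub_of_trunc_eq hn hfa hz hzt h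
  have hfactor : (n : ℂ) * fcoeff g 0 0 - fcoeff f 0 1 ≠ 0 := by
    rwa [sub_ne_zero, ne_comm, Ne, ← div_eq_iff hg]
  have hprod : ((n : ℂ) * fcoeff g 0 0 - fcoeff f 0 1) * (coeff n z - coeff n zt) = 0 := by
    linear_combination hrhs - hlhs
  exact sub_eq_zero.1 ((mul_eq_zero.1 hprod).resolve_left hfactor)

theorem briot_bouquet_finite_determinacy_general
    (f g ft gt : MvPowerSeries (Fin 2) ℂ)
    (hg : fcoeff g 0 0 ≠ 0)
    (hlambda : ∀ k : ℕ, 1 ≤ k → fcoeff f 0 1 / fcoeff g 0 0 ≠ (k : ℂ))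
    (m : ℕ)
    (hfa : ∀ i j : ℕ, i + j ≤ m → fcoeff f i j = fcoeff ft i j)
    (hga : ∀ i j : ℕ, i + j ≤ m → fcoeff g i j = fcoeff gt i j) :
    ∀ z zt : PowerSeries ℂ,
      PowerSeries.constantCoeff z = 0 →
      subst2 g z * (PowerSeries.X * z.derivativeFun) = subst2 f z →
      PowerSeries.constantCoeff zt = 0 →
      subst2 gt zt * (PowerSeries.X * zt.derivativeFun) = subst2 ft zt →
      ∀ i : ℕ, i ≤ m → PowerSeries.coeff i z = PowerSeries.coeff i zt := by
  intro z zt hz hzeq hzt hzteq i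
  induction i using Nat.strong_induction_on with
  | _ n ih =>
    intro hnm
    rcases Nat.eq_zero_or_pos n with rfl | hn
    · simp only [coeff_zero_eq_constantCoeff_apply, hz, hzt]
    · exact briot_bouquet_coeff_eq_of_trunc_eq hn hg (hlambda n hn)
        (fun i j hij => hfa i j (hij.trans hnm)) (fun i j hij => hga i j (by omega))
        hz hzeq hzt hzteq (trunc_eq_trunc_iff.2 fun k hk => ih k hk (by omega))

/-- Briot–Bouquet, finite determinacy: if the coefficients of `(f, g)` and
`(f̃, g̃)` agree up to total degree `m`, with `g(0,0) ≠ 0`, `f(0,0) = f̃(0,0) = 0`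
and `λ = f_{0,1}/g_{0,0}` not a positive integer, then the unique solutions `z`,
`z̃` with zero constant term of the respective Briot–Bouquet equations agree in
all coefficients of index `≤ m`. -/
theorem briot_bouquet_finite_determinacy
    (f g ft gt : MvPowerSeries (Fin 2) ℂ)
    (hg : fcoeff g 0 0 ≠ 0) (hf : fcoeff f 0 0 = 0) (hft : fcoeff ft 0 0 = 0)
    (hlambda : ∀ k : ℕ, 1 ≤ k → fcoeff f 0 1 / fcoeff g 0 0 ≠ (k : ℂ))
    (m : ℕ) (hm : 1 ≤ m)
    (hfa : ∀ i j : ℕ, i + j ≤ m → fcoeff f i j = fcoeff ft i j)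
    (hga : ∀ i j : ℕ, i + j ≤ m → fcoeff g i j = fcoeff gt i j) :
    ∀ z zt : PowerSeries ℂ,
      PowerSeries.constantCoeff z = 0 →
      subst2 g z * (PowerSeries.X * z.derivativeFun) = subst2 f z →
      PowerSeries.constantCoeff zt = 0 →
      subst2 gt zt * (PowerSeries.X * zt.derivativeFun) = subst2 ft zt →
      ∀ i : ℕ, i ≤ m → PowerSeries.coeff i z = PowerSeries.coeff i zt :=
  briot_bouquet_finite_determinacy_general f g ft gt hg hlambda m hfa hga
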